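/- arXiv:1404.6228 — 3 statements merged into one kernel-verified Lean document; each statement's English description precedes it below -/
import Mathlib

section
/- In the urn-filling Nim game arena for N balls (players alternately add 1 or 2 balls to the urn until N balls are added, and the player who adds the last ball loses), the relation ⊵₀ defined by v ⊵₀ v' iff v and v' belong to the same player, λ(v) ≥ λ(v'), and λ(v) ≡ λ(v') (mod 3), is a simulation relation compatible with Bad, where λ(v) is the number of balls in the urn at state v. -/
/-- A simulation relation compatible with `Bad`: a partial order on same-player
pairs such that whenever `R v₁ v₂`, either `v₁ ∈ Bad`, or every successor of `v₂`
is `R`-below some successor of `v₁`, and `v₂ ∈ Bad` implies `v₁ ∈ Bad`. -/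
def IsSim {V : Type*} (VA VB : Set V) (E : V → V → Prop) (Bad : Set V)
    (R : V → V → Prop) : Prop :=
  (∀ v₁ v₂, R v₁ v₂ → (v₁ ∈ VA ∧ v₂ ∈ VA) ∨ (v₁ ∈ VB ∧ v₂ ∈ VB)) ∧
  (∀ v ∈ VA ∪ VB, R v v) ∧
  (∀ v₁ v₂ v₃, R v₁ v₂ → R v₂ v₃ → R v₁ v₃) ∧
  (∀ v₁ v₂, R v₁ v₂ → R v₂ v₁ → v₁ = v₂) ∧
  (∀ v₁ v₂, R v₁ v₂ → v₁ ∈ Bad ∨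
    ((∀ v₂', E v₂ v₂' → ∃ v₁', E v₁ v₁' ∧ R v₁' v₂') ∧
     (v₂ ∈ Bad → v₁ ∈ Bad)))

/-- States of the urn-filling Nim game for `N = 8`: `(true, n)` is the Player A
state with `n` balls in the urn, `(false, n)` the Player B state. -/
abbrev NimState := Bool × ℕ

/-- Player A states: circles labelled 0, 2, 3, 4, 5, 6, 7. -/
def nimVA : Set NimState := {v | v.1 = true ∧ (v.2 = 0 ∨ (2 ≤ v.2 ∧ v.2 ≤ 7))}

/-- Player B states: squares labelled 1, ..., 8. -/
def nimVB : Set NimState := {v | v.1 = false ∧ 1 ≤ v.2 ∧ v.2 ≤ 8}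

/-- Edges: from a state labelled `n` one moves to a state of the other player
labelled `n+1` or `n+2`, plus the extra (dotted) edges from B-state 7 to
A-states 5 and 6, and from B-state 6 to A-state 5. -/
def nimE (v w : NimState) : Prop :=
  ((v ∈ nimVA ∧ w ∈ nimVB ∨ v ∈ nimVB ∧ w ∈ nimVA) ∧
    (w.2 = v.2 + 1 ∨ w.2 = v.2 + 2))
  ∨ (v = (false, 7) ∧ (w = (true, 5) ∨ w = (true, 6)))
  ∨ (v = (false, 6) ∧ w = (true, 5))

/-- Bad states: the A-state labelled 7 and the B-state labelled 8. -/
def nimBad : Set NimState := {(true, 7), (false, 8)}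

/-- The relation `⊵₀`: same player, `λ(v) ≥ λ(v')`, and
`λ(v) ≡ λ(v') (mod 3)`. -/
def nimR (v w : NimState) : Prop :=
  ((v ∈ nimVA ∧ w ∈ nimVA) ∨ (v ∈ nimVB ∧ w ∈ nimVB)) ∧
    w.2 ≤ v.2 ∧ v.2 % 3 = w.2 % 3

instance (v : NimState) : Decidable (v ∈ nimVA) := by
  unfold nimVA; simp only [Set.mem_setOf_eq]; infer_instance

instance (v : NimState) : Decidable (v ∈ nimVB) := by
  unfold nimVB; simp only [Set.mem_setOf_eq]; infer_instance

instance (v : NimState) : Decidable (v ∈ nimBad) := by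
  unfold nimBad
  simp only [Set.mem_insert_iff, Set.mem_singleton_iff]; infer_instance

instance (v w : NimState) : Decidable (nimE v w) := by
  unfold nimE; infer_instance

instance (v w : NimState) : Decidable (nimR v w) := by
  unfold nimR; infer_instance

lemma nimE_bound {v w : NimState} (h : nimE v w) : w.2 ≤ 8 := by
  rcases h with ⟨⟨_, h⟩ | ⟨_, h⟩, _⟩ | ⟨_, h | h⟩ | ⟨_, h⟩
  · simp [nimVB] at h; omega
  · simp [nimVA] at h; omega
  all_goals subst h; norm_num

lemma nim_key : ∀ (b c : Bool) (n₁ n₂ m : Fin 9),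
    nimR (b, (n₁ : ℕ)) (b, (n₂ : ℕ)) → nimE (b, (n₂ : ℕ)) (c, (m : ℕ)) →
    ((b, (n₁ : ℕ)) ∈ nimBad ∨
      ∃ (c' : Bool) (k : Fin 9), nimE (b, (n₁ : ℕ)) (c', (k : ℕ)) ∧
        nimR (c', (k : ℕ)) (c, (m : ℕ))) := by decide

/-- `⊵₀` is a simulation relation compatible with `Bad` in the
urn-filling Nim game for `N = 8`. -/
theorem nim_R_is_simulation : IsSim nimVA nimVB nimE nimBad nimR := by
  refine ⟨fun v₁ v₂ h => h.1, ?_, ?_, ?_, ?_⟩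
  · intro v hv
    refine ⟨?_, le_refl _, rfl⟩
    rcases hv with h | h
    · exact Or.inl ⟨h, h⟩
    · exact Or.inr ⟨h, h⟩
  · intro v₁ v₂ v₃ h12 h23
    refine ⟨?_, le_trans h23.2.1 h12.2.1, h12.2.2.trans h23.2.2⟩
    rcases h12.1 with ⟨a, b⟩ | ⟨a, b⟩ <;> rcases h23.1 with ⟨c, d⟩ | ⟨c, d⟩
    · exact Or.inl ⟨a, d⟩
    · simp [nimVA] at b; simp [nimVB] at c; simp [b.1] at c
    · simp [nimVB] at b; simp [nimVA] at c; simp [b.1] at c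
    · exact Or.inr ⟨a, d⟩
  · intro v₁ v₂ h12 h21
    have hn : v₁.2 = v₂.2 := le_antisymm h21.2.1 h12.2.1
    have hb : v₁.1 = v₂.1 := by
      rcases h12.1 with ⟨a, b⟩ | ⟨a, b⟩ <;> simp [nimVA, nimVB] at a b <;>
        rw [a.1, b.1]
    exact Prod.ext hb hn
  · intro v₁ v₂ h
    have hb : v₁.1 = v₂.1 := by
      rcases h.1 with ⟨a, b⟩ | ⟨a, b⟩ <;> simp [nimVA, nimVB] at a b <;>
        rw [a.1, b.1]
    have hn₁ : v₁.2 ≤ 8 := by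
      rcases h.1 with ⟨a, _⟩ | ⟨a, _⟩ <;> simp [nimVA, nimVB] at a <;> omega
    have hn₂ : v₂.2 ≤ 8 := by
      rcases h.1 with ⟨_, a⟩ | ⟨_, a⟩ <;> simp [nimVA, nimVB] at a <;> omega
    by_cases hbad : v₁ ∈ nimBad
    · exact Or.inl hbad
    right
    constructor
    · intro w hw
      have hm : w.2 ≤ 8 := nimE_bound hw
      obtain ⟨b₁, n₁⟩ := v₁; obtain ⟨b₂, n₂⟩ := v₂; obtain ⟨c, m⟩ := w
      simp only at hb hn₁ hn₂ hm; subst hb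
      have := nim_key b₁ c ⟨n₁, by omega⟩ ⟨n₂, by omega⟩ ⟨m, by omega⟩ h hw
      rcases this with hB | ⟨c', k, h1, h2⟩
      · exact absurd hB hbad
      · exact ⟨(c', (k : ℕ)), h1, h2⟩
    · intro hb2
      exfalso
      obtain ⟨b₁, n₁⟩ := v₁; obtain ⟨b₂, n₂⟩ := v₂
      simp only at hb; subst hb
      obtain ⟨hle, hmod⟩ := h.2
      simp only at hle hmod
      rcases h.1 with ⟨a, b⟩ | ⟨a, b⟩ <;> simp [nimVA, nimVB] at a b <;>
        obtain ⟨rfl, ha⟩ := a <;> simp [nimBad] at hb2 hbad <;> omega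
end

section
/- Let G be a finite turn-based safety game in which every state has a successor, and suppose I ∉ Attr_Bad. Define σ(v) for v ∈ V_A ∩ Win as any successor of v in Win (which exists), and arbitrarily elsewhere. Then σ is a winning strategy for Player A: Reach(G_σ, I) ∩ Bad = ∅. -/
/-- The attractor sequence of a turn-based safety game. -/
def Attr {V : Type*} (VA VB : Set V) (E : V → V → Prop) (Bad : Set V) : ℕ → Set V
  | 0 => Bad
  | (n + 1) => Attr VA VB E Bad n
      ∪ {v | v ∈ VB ∧ ∃ v', E v v' ∧ v' ∈ Attr VA VB E Bad n}
      ∪ {v | v ∈ VA ∧ ∀ v', E v v' → v' ∈ Attr VA VB E Bad n}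

/-- The edge relation of the game `G_σ` where Player A's moves are restricted to
the strategy `σ`. -/
def Estrat {V : Type*} (VA : Set V) (E : V → V → Prop) (σ : V → V) (v v' : V) : Prop :=
  E v v' ∧ (v ∈ VA → v' = σ v)

/-- if every state has a successor, `I ∉ Attr_Bad`, and `σ` maps
every winning `A`-state (i.e. every `A`-state outside the full attractor) to a
winning successor, then `σ` is a winning strategy: `Reach(G_σ, I) ∩ Bad = ∅`. -/
theorem attractor_strategy_winning {V : Type*} [Fintype V]
    (VA VB : Set V) (E : V → V → Prop) (I : V) (Bad : Set V)
    (hdisj : Disjoint VA VB) (hcov : VA ∪ VB = Set.univ)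
    (hE : ∀ v w, E v w → (v ∈ VA ∧ w ∈ VB) ∨ (v ∈ VB ∧ w ∈ VA))
    (htot : ∀ v : V, ∃ w, E v w)
    (hI : I ∉ ⋃ i, Attr VA VB E Bad i)
    (σ : V → V)
    (hσ : ∀ v ∈ VA, E v (σ v))
    (hσwin : ∀ v ∈ VA, v ∉ (⋃ i, Attr VA VB E Bad i) →
        σ v ∉ ⋃ i, Attr VA VB E Bad i) :
    ∀ v, Relation.ReflTransGen (Estrat VA E σ) I v → v ∉ Bad := by
  have key : ∀ v, Relation.ReflTransGen (Estrat VA E σ) I v →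
      v ∉ ⋃ i, Attr VA VB E Bad i := by
    intro v h
    induction h with
    | refl => exact hI
    | tail hab hbc ih =>
      rename_i b c
      obtain ⟨hEbc, hstrat⟩ := hbc
      by_cases hbA : b ∈ VA
      · rw [hstrat hbA]; exact hσwin b hbA ih
      · have hbB : b ∈ VB := by
          have := Set.mem_univ b
          rw [← hcov] at this
          rcases this with h | h
          · exact absurd h hbA
          · exact h
        intro hc
        simp only [Set.mem_iUnion] at hc
        obtain ⟨n, hn⟩ := hc
        apply ih
        simp only [Set.mem_iUnion]
        exact ⟨n + 1, Or.inl (Or.inr ⟨hbB, c, hEbc, hn⟩)⟩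
  intro v h hv
  exact key v h (Set.mem_iUnion.mpr ⟨0, hv⟩)
end

section
/- There exists a finite turn-based safety game G with a simulation relation ⪰ compatible with Bad (but not a tba-simulation) such that the set of winning states of G is not ⪰-downward closed. Concretely: in the game with A-states v₀ (initial), v₁, v₂, B-states b₁, b₂ (intermediate), and bad B-states v₁', v₂', where v₀ → b₁ → v₁, v₀ → b₂ → v₂, v₁ → v₁'', v₁ → v₁', v₂ → v₂' (v₂' is v₂'s only successor), Bad = {v₁', v₂'}, and ⪰ relates v₁ ⪰ v₂ and v₁' ⪰ v₂': ⪰ is a simulation compatible with Bad, yet v₁ is winning while v₂ is losing. -/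
/-- A turn-based alternating simulation (tba-simulation) for the safety game
`(V_A, V_B, E, Bad)`: a partial order on same-player pairs such that whenever
`R v₁ v₂`, either `v₁ ∈ Bad`, or (i) if `v₁ ∈ V_A` then every successor of `v₁`
is `R`-above some successor of `v₂`, (ii) if `v₁ ∈ V_B` then every successor of
`v₂` is `R`-below some successor of `v₁`, and (iii) `v₂ ∈ Bad` implies `v₁ ∈ Bad`. -/
def IsTBASim {V : Type*} (VA VB : Set V) (E : V → V → Prop) (Bad : Set V)
    (R : V → V → Prop) : Prop :=
  (∀ v₁ v₂, R v₁ v₂ → (v₁ ∈ VA ∧ v₂ ∈ VA) ∨ (v₁ ∈ VB ∧ v₂ ∈ VB)) ∧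
  (∀ v ∈ VA ∪ VB, R v v) ∧
  (∀ v₁ v₂ v₃, R v₁ v₂ → R v₂ v₃ → R v₁ v₃) ∧
  (∀ v₁ v₂, R v₁ v₂ → R v₂ v₁ → v₁ = v₂) ∧
  (∀ v₁ v₂, R v₁ v₂ → v₁ ∈ Bad ∨
    ((v₁ ∈ VA → ∀ v₁', E v₁ v₁' → ∃ v₂', E v₂ v₂' ∧ R v₁' v₂') ∧
     (v₁ ∈ VB → ∀ v₂', E v₂ v₂' → ∃ v₁', E v₁ v₁' ∧ R v₁' v₂') ∧
     (v₂ ∈ Bad → v₁ ∈ Bad)))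

/-- `v` is winning for Player A: there is a (memoryless) strategy `σ` such that
no bad state is reachable from `v` in `G_σ`. -/
def Winning {V : Type*} (VA : Set V) (E : V → V → Prop) (Bad : Set V) (v : V) : Prop :=
  ∃ σ : V → V, (∀ u ∈ VA, E u (σ u)) ∧
    ∀ w, Relation.ReflTransGen (Estrat VA E σ) v w → w ∉ Bad

/-- The eight states of the counterexample game: A-states `w0` (initial), `w1`,
`w2`; B-states `b1`, `b2` (intermediate), `t1` (= v₁'', a safe dead-end) and the
bad B-states `u1` (= v₁'), `u2` (= v₂'). -/
inductive CexS | w0 | w1 | w2 | b1 | b2 | u1 | u2 | t1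
  deriving DecidableEq

open CexS

instance : Fintype CexS :=
  ⟨⟨{w0, w1, w2, b1, b2, u1, u2, t1}, by decide⟩, by intro x; cases x <;> decide⟩

def cexVA : Set CexS := {w0, w1, w2}
def cexVB : Set CexS := {b1, b2, u1, u2, t1}

/-- Edges: `w0 → b1 → w1`, `w0 → b2 → w2`, `w1 → t1`, `w1 → u1`, `w2 → u2`
(`u2` is `w2`'s only successor). -/
def cexE (v w : CexS) : Prop :=
  (v = w0 ∧ w = b1) ∨ (v = w0 ∧ w = b2) ∨ (v = b1 ∧ w = w1) ∨
  (v = b2 ∧ w = w2) ∨ (v = w1 ∧ w = t1) ∨ (v = w1 ∧ w = u1) ∨ (v = w2 ∧ w = u2)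

def cexBad : Set CexS := {u1, u2}

/-- The relation `⪰`: reflexivity together with `w1 ⪰ w2` and `u1 ⪰ u2`. -/
def cexR (v w : CexS) : Prop :=
  v = w ∨ (v = w1 ∧ w = w2) ∨ (v = u1 ∧ w = u2)

/-- `⪰` is a simulation compatible with `Bad` but not a
tba-simulation, `w1 ⪰ w2`, yet `w1` is winning while `w2` is losing; hence the
set of winning states is not `⪰`-downward closed. -/
theorem cex_sim_not_downward_closed :
    IsSim cexVA cexVB cexE cexBad cexR ∧
    ¬ IsTBASim cexVA cexVB cexE cexBad cexR ∧
    cexR w1 w2 ∧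
    Winning cexVA cexE cexBad w1 ∧
    ¬ Winning cexVA cexE cexBad w2 := by
  refine ⟨?_, ?_, ?_, ?_, ?_⟩
  · refine ⟨?_, ?_, ?_, ?_, ?_⟩ <;>
      simp only [IsSim, cexVA, cexVB, cexE, cexBad, cexR, Set.mem_insert_iff,
        Set.mem_singleton_iff, Set.mem_union] <;> decide
  · intro ⟨_, _, _, _, h⟩
    rcases h w1 w2 (Or.inr (Or.inl ⟨rfl, rfl⟩)) with hb | ⟨h1, _, _⟩
    · simp [cexBad] at hb
    · rcases h1 (by simp [cexVA]) t1 (by simp [cexE]) with ⟨v', hE, hR⟩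
      simp [cexE] at hE
      subst hE
      simp [cexR] at hR
  · exact Or.inr (Or.inl ⟨rfl, rfl⟩)
  · refine ⟨fun v => match v with | w0 => b1 | w1 => t1 | _ => u2, ?_, ?_⟩
    · intro u hu
      simp [cexVA] at hu
      rcases hu with rfl | rfl | rfl <;> simp [cexE]
    · intro w hw
      have key : w = w1 ∨ w = t1 := by
        induction hw with
        | refl => exact Or.inl rfl
        | @tail b c _ hstep ih =>
          obtain ⟨hE, hA⟩ := hstep
          rcases ih with rfl | rfl
          · exact Or.inr (hA (by simp [cexVA]))
          · simp [cexE] at hE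
      rcases key with rfl | rfl <;> simp [cexBad]
  · intro ⟨σ, hσ, hsafe⟩
    have hE2 : cexE w2 (σ w2) := hσ w2 (by simp [cexVA])
    have hu2 : σ w2 = u2 := by
      revert hE2; cases h : σ w2 <;> simp [cexE]
    refine hsafe u2 ?_ (by simp [cexBad])
    exact Relation.ReflTransGen.single ⟨hu2 ▸ hE2, fun _ => hu2.symm⟩
end
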